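/- arXiv:1706.00817 — 4 statements merged into one kernel-verified Lean document; each statement's English description precedes it below -/
import Mathlib

section
/- There are exactly 240 generic monodromy representations of B in S₃, i.e. the set of group homomorphisms φ: B → S₃ such that φ(σ) is a transposition and the image of φ is a transitive subgroup of S₃ has cardinality 240. -/
/-- Generators of the braid group `B₂(C₂)` in Bellingeri's presentation. -/
inductive Gen : Type
  | a1 | a2 | b1 | b2 | s
  deriving DecidableEq

namespace Braid

open FreeGroup

abbrev A1 : FreeGroup Gen := FreeGroup.of Gen.a1
abbrev A2 : FreeGroup Gen := FreeGroup.of Gen.a2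
abbrev B1 : FreeGroup Gen := FreeGroup.of Gen.b1
abbrev B2 : FreeGroup Gen := FreeGroup.of Gen.b2
abbrev Sg : FreeGroup Gen := FreeGroup.of Gen.s

/-- The eleven relations (R2), (R3), (R4), (TR) of Bellingeri's presentation,
written as words that are set equal to `1`. -/
def rels : Set (FreeGroup Gen) :=
  { Sg⁻¹ * A1 * Sg⁻¹ * A1 * (A1 * Sg⁻¹ * A1 * Sg⁻¹)⁻¹,
    Sg⁻¹ * A2 * Sg⁻¹ * A2 * (A2 * Sg⁻¹ * A2 * Sg⁻¹)⁻¹,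
    Sg⁻¹ * B1 * Sg⁻¹ * B1 * (B1 * Sg⁻¹ * B1 * Sg⁻¹)⁻¹,
    Sg⁻¹ * B2 * Sg⁻¹ * B2 * (B2 * Sg⁻¹ * B2 * Sg⁻¹)⁻¹,
    Sg⁻¹ * A1 * Sg * A2 * (A2 * Sg⁻¹ * A1 * Sg)⁻¹,
    Sg⁻¹ * B1 * Sg * B2 * (B2 * Sg⁻¹ * B1 * Sg)⁻¹,
    Sg⁻¹ * A1 * Sg * B2 * (B2 * Sg⁻¹ * A1 * Sg)⁻¹,
    Sg⁻¹ * B1 * Sg * A2 * (A2 * Sg⁻¹ * B1 * Sg)⁻¹,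
    Sg⁻¹ * A1 * Sg⁻¹ * B1 * (B1 * Sg⁻¹ * A1 * Sg)⁻¹,
    Sg⁻¹ * A2 * Sg⁻¹ * B2 * (B2 * Sg⁻¹ * A2 * Sg)⁻¹,
    (A1 * B1⁻¹ * A1⁻¹ * B1) * (A2 * B2⁻¹ * A2⁻¹ * B2) * (Sg * Sg)⁻¹ }

/-- The group `B`, isomorphic to the braid group `B₂(C₂)` on two strings
on a genus `2` surface. -/
abbrev B : Type := PresentedGroup rels

/-- The image of the generator `σ` in `B`. -/
def σB : B := PresentedGroup.of Gen.s

/-- A generic monodromy representation of `B` in `Sₙ`: a homomorphism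
`φ : B → Sₙ` such that `φ(σ)` is a transposition and the image of `φ` is a
transitive subgroup of `Sₙ`. -/
def IsGeneric (n : ℕ) (φ : B →* Equiv.Perm (Fin n)) : Prop :=
  (φ σB).IsSwap ∧ ∀ i j : Fin n, ∃ g : B, φ g i = j

end Braid

open Braid

/-! Since `s = φ σ` is an involution, each of the ten relations (R2)–(R4) says that `s x s`
commutes with `y` for a pair `{x, y}` of surface generators, and they cover every such pair.
In `S₃` this puts the surface generators either all in `{1, s}`, in which case the fixed point
of `s` is fixed by the whole image, or all in the abelian group `A₃`, which `s` normalizes, so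
that every relation holds and transitivity just asks for one generator to be a `3`-cycle.
The generic representations thus correspond to a transposition (`3` choices) and a nontrivial
quadruple in `A₃` (`3⁴ - 1` choices), and `3 · 80 = 240`. -/

open Equiv
open scoped commutatorElement

namespace PresentedGroup

variable {α G : Type*} [Group G] {rels : Set (FreeGroup α)}

theorem lift_comp_of_eq_one (φ : PresentedGroup rels →* G) :
    ∀ r ∈ rels, FreeGroup.lift (fun a => φ (of a)) r = 1 := by
  intro r hr
  rw [show FreeGroup.lift (fun a => φ (of a)) = φ.comp (mk rels) from
    FreeGroup.ext_hom _ _ fun _ => FreeGroup.lift_apply_of, MonoidHom.comp_apply,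
    one_of_mem hr, map_one]

def homEquiv :
    (PresentedGroup rels →* G) ≃ {f : α → G // ∀ r ∈ rels, FreeGroup.lift f r = 1} where
  toFun φ := ⟨fun a => φ (of a), lift_comp_of_eq_one φ⟩
  invFun f := toGroup f.2
  left_inv _ := ext fun _ => toGroup.of _
  right_inv _ := Subtype.ext <| funext fun _ => toGroup.of _

theorem apply_eq_self_of_forall_of {β : Type*} (φ : PresentedGroup rels →* Perm β) {z : β}
    (h : ∀ a, φ (of a) z = z) (g : PresentedGroup rels) : φ g z = z :=
  generated_by rels ((MulAction.stabilizer (Perm β) z).comap φ) h g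

end PresentedGroup

theorem commute_conj_comm {G : Type*} [Group G] {s x y : G} (hs : s * s = 1) :
    Commute (s * x * s) y ↔ Commute (s * y * s) x := by
  rw [← Commute.conj_iff s, inv_eq_of_mul_eq_one_right hs, Commute.symm_iff,
    show s * (s * x * s) * s = s * s * x * (s * s) by group, hs, one_mul, mul_one]

theorem Nat.card_fun_mem_subgroup_ne_one {ι G : Type*} [Finite ι] [Group G] (H : Subgroup G)
    [Finite H] :
    Nat.card {g : ι → G // (∀ k, g k ∈ H) ∧ ∃ k, g k ≠ 1} = Nat.card H ^ Nat.card ι - 1 := by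
  classical
  have : Fintype ι := Fintype.ofFinite ι
  have : Fintype H := Fintype.ofFinite H
  let e : {g : ι → G // (∀ k, g k ∈ H) ∧ ∃ k, g k ≠ 1} ≃ {g : ι → H // g ≠ 1} :=
    { toFun g := ⟨fun k => ⟨g.1 k, g.2.1 k⟩, fun h => by
        obtain ⟨k, hk⟩ := g.2.2
        exact hk (congrArg Subtype.val (congrFun h k))⟩
      invFun g := ⟨fun k => g.1 k, fun k => (g.1 k).2, by
        by_contra! h
        exact g.2 (funext fun k => Subtype.ext (h k))⟩ }
  rw [Nat.card_congr e, ← Nat.card_fun, Nat.card_eq_fintype_card, Nat.card_eq_fintype_card,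
    Fintype.card_subtype_compl, Fintype.card_subtype_eq]

namespace Equiv.Perm

theorem IsSwap.eq_or_mem_alternatingGroup_of_commute_conj {s x : Perm (Fin 3)} (hs : s.IsSwap)
    (h : Commute (s * x * s) x) : x = s ∨ x ∈ alternatingGroup (Fin 3) := by
  obtain ⟨a, b, hab, rfl⟩ := hs
  rw [commute_iff_eq] at h
  rw [mem_alternatingGroup]
  revert x a b
  decide

theorem mem_alternatingGroup_of_commute {z y : Perm (Fin 3)} (hz : z ∈ alternatingGroup (Fin 3))
    (hz₁ : z ≠ 1) (h : Commute z y) : y ∈ alternatingGroup (Fin 3) := by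
  rw [commute_iff_eq] at h
  rw [mem_alternatingGroup] at hz ⊢
  revert z y
  decide

theorem exists_pow_apply_eq_of_mem_alternatingGroup {z : Perm (Fin 3)}
    (hz : z ∈ alternatingGroup (Fin 3)) (hz₁ : z ≠ 1) (i j : Fin 3) : ∃ n : ℕ, (z ^ n) i = j := by
  suffices ∃ n : Fin 3, (z ^ (n : ℕ)) i = j from let ⟨n, h⟩ := this; ⟨n, h⟩
  rw [mem_alternatingGroup] at hz
  revert z i j
  decide

theorem mul_mul_mem_alternatingGroup {α : Type*} [Fintype α] [DecidableEq α] (s : Perm α)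
    {x : Perm α} (hx : x ∈ alternatingGroup α) : s * x * s ∈ alternatingGroup α := by
  rw [mem_alternatingGroup] at hx ⊢
  rw [map_mul, map_mul, hx, mul_one, Int.units_mul_self]

end Equiv.Perm

theorem Gen.forall_iff {P : Gen → Prop} : (∀ k, P k) ↔ P .a1 ∧ P .a2 ∧ P .b1 ∧ P .b2 ∧ P .s :=
  ⟨fun h => ⟨h _, h _, h _, h _, h _⟩, fun h k => by cases k <;> simp only [h]⟩

instance : Fintype Gen :=
  ⟨{.a1, .a2, .b1, .b2, .s}, fun k => by cases k <;> decide⟩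

namespace Braid

open PresentedGroup

theorem rels_iff {G : Type*} [Group G] (f : Gen → G) (hs : f .s * f .s = 1) :
    (∀ r ∈ rels, FreeGroup.lift f r = 1) ↔
      (∀ k l, k ≠ .s → l ≠ .s → Commute (f .s * f k * f .s) (f l)) ∧
        ⁅f .a1, (f .b1)⁻¹⁆ * ⁅f .a2, (f .b2)⁻¹⁆ = 1 := by
  have hcomm : ∀ x y, f .s * x * f .s * y = y * f .s * x * f .s ↔ Commute (f .s * x * f .s) y :=
    fun x y => by simp only [Commute, SemiconjBy, mul_assoc]
  simp only [rels, Set.mem_insert_iff, Set.mem_singleton_iff, forall_eq_or_imp, forall_eq,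
    map_mul, map_inv, FreeGroup.lift_apply_of, mul_inv_eq_one, inv_eq_of_mul_eq_one_right hs, hs,
    commutatorElement_def, inv_inv, Gen.forall_iff, ne_eq, reduceCtorEq, not_false_eq_true,
    not_true_eq_false, true_implies, false_implies, and_true, hcomm, commute_conj_comm hs]
  tauto

def IsGenericImage (f : Gen → Perm (Fin 3)) : Prop :=
  (f .s).IsSwap ∧ (∀ k ≠ Gen.s, f k ∈ alternatingGroup (Fin 3)) ∧ ∃ k ≠ Gen.s, f k ≠ 1

theorem rels_of_isGenericImage {f : Gen → Perm (Fin 3)} (hf : IsGenericImage f) :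
    ∀ r ∈ rels, FreeGroup.lift f r = 1 := by
  obtain ⟨⟨a, b, -, hs⟩, hA, -⟩ := hf
  have hcomm : ∀ x ∈ alternatingGroup (Fin 3), ∀ y ∈ alternatingGroup (Fin 3), Commute x y :=
    fun x hx y hy => Subtype.ext_iff.mp <|
      (alternatingGroup.isMulCommutative_of_card_le_three (by simp)).is_comm.comm ⟨x, hx⟩ ⟨y, hy⟩
  have hss : f .s * f .s = 1 := by rw [hs, swap_mul_self]
  refine (rels_iff f hss).2 ⟨fun k l hk hl => ?_, ?_⟩
  · exact hcomm _ (Perm.mul_mul_mem_alternatingGroup _ (hA k hk)) _ (hA l hl)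
  · rw [(hcomm _ (hA .a1 nofun) _ (inv_mem (hA .b1 nofun))).commutator_eq,
      (hcomm _ (hA .a2 nofun) _ (inv_mem (hA .b2 nofun))).commutator_eq, one_mul]

theorem IsGeneric.exists_of_ne_one_of_ne_σ {φ : B →* Perm (Fin 3)} (hφ : IsGeneric 3 φ) :
    ∃ k, φ (of k) ≠ 1 ∧ φ (of k) ≠ φ σB := by
  obtain ⟨⟨a, b, -, hs⟩, htr⟩ := hφ
  obtain ⟨c, hca, hcb⟩ := (by decide : ∀ a b : Fin 3, ∃ c, c ≠ a ∧ c ≠ b) a b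
  by_contra! h
  have hfix : ∀ k, φ (of k) c = c := fun k => by
    by_cases hk : φ (of k) = 1
    · rw [hk, Perm.one_apply]
    · rw [h k hk, hs, swap_apply_of_ne_of_ne hca hcb]
  obtain ⟨g, hg⟩ := htr c a
  exact hca (apply_eq_self_of_forall_of φ hfix g ▸ hg)

theorem mem_alternatingGroup_of_rels {f : Gen → Perm (Fin 3)} (hs : (f .s).IsSwap)
    (hrel : ∀ r ∈ rels, FreeGroup.lift f r = 1) {k : Gen} (hk₁ : f k ≠ 1) (hks : f k ≠ f .s) :
    ∀ l ≠ Gen.s, f l ∈ alternatingGroup (Fin 3) := by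
  have hss : f .s * f .s = 1 := by obtain ⟨a, b, -, h⟩ := hs; rw [h, swap_mul_self]
  have hc := ((rels_iff f hss).1 hrel).1
  have hk : k ≠ .s := by rintro rfl; exact hks rfl
  have hkA := (hs.eq_or_mem_alternatingGroup_of_commute_conj (hc k k hk hk)).resolve_left hks
  have hconj : f .s * f k * f .s ≠ 1 := fun h =>
    hk₁ (mul_left_cancel (mul_right_cancel (h.trans (by rw [mul_one, hss]))))
  exact fun l hl => Perm.mem_alternatingGroup_of_commute
    (Perm.mul_mul_mem_alternatingGroup _ hkA) hconj (hc k l hk hl)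

theorem isGeneric_three_iff (φ : B →* Perm (Fin 3)) :
    IsGeneric 3 φ ↔ IsGenericImage (fun k => φ (of k)) := by
  constructor
  · intro hφ
    obtain ⟨k, hk₁, hks⟩ := hφ.exists_of_ne_one_of_ne_σ
    exact ⟨hφ.1, mem_alternatingGroup_of_rels hφ.1 (lift_comp_of_eq_one φ) hk₁ hks,
      k, by rintro rfl; exact hks rfl, hk₁⟩
  · rintro ⟨hs, hA, k, hk, hk₁⟩
    refine ⟨hs, fun i j => ?_⟩
    obtain ⟨n, hn⟩ := Perm.exists_pow_apply_eq_of_mem_alternatingGroup (hA k hk) hk₁ i j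
    exact ⟨of k ^ n, by rwa [map_pow]⟩

theorem card_isGenericImage : Nat.card {f // IsGenericImage f} = 240 := by
  classical
  have hswap : Nat.card {s : Perm (Fin 3) // s.IsSwap} = 3 := by
    rw [Nat.card_congr (Equiv.subtypeEquivRight fun _ => Perm.card_support_eq_two.symm),
      Nat.card_eq_fintype_card]
    rfl
  have hgen : Nat.card {k : Gen // k ≠ .s} = 4 := by
    rw [Nat.card_eq_fintype_card]
    rfl
  let e : {f // IsGenericImage f} ≃ {s : Perm (Fin 3) // s.IsSwap} ×
      {g : {k : Gen // k ≠ .s} → Perm (Fin 3) //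
        (∀ k, g k ∈ alternatingGroup (Fin 3)) ∧ ∃ k, g k ≠ 1} :=
    ((funSplitAt Gen.s _).subtypeEquiv fun f => by
      simp only [IsGenericImage, funSplitAt_apply, Subtype.forall, Subtype.exists,
        exists_prop]).trans subtypeProdEquivProd
  rw [Nat.card_congr e, Nat.card_prod, hswap, Nat.card_fun_mem_subgroup_ne_one,
    nat_card_alternatingGroup, hgen, Nat.card_fin]
  rfl

end Braid

/-- There are exactly 240 generic monodromy representations of B in S₃. -/
theorem stmt1 :
    Set.ncard {φ : B →* Equiv.Perm (Fin 3) | IsGeneric 3 φ} = 240 := by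
  rw [← Nat.card_coe_set_eq, ← card_isGenericImage]
  exact Nat.card_congr <| (PresentedGroup.homEquiv.subtypeEquiv isGeneric_three_iff).trans <|
    (subtypeSubtypeEquivSubtypeInter _ _).trans <|
      subtypeEquivRight fun _ => and_iff_right_of_imp rels_of_isGenericImage
end

section
/- Every orbit of the conjugation action of S₄ on the set of generic monodromy representations of B in S₄ consists of exactly 12 elements. -/
open Braid

/-!
Normalise `φ σ = (0 1)`. Each of the relations (R2)–(R4) becomes `t₀ x t₀ y = y t₀ x t₀` with
`t₀ = (0 1)`, and every pair of surface generators is linked by one of them. In `S₄` a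
self-linked `x` that does not commute with `z₀ = (0 1)(2 3)` fixes a point `p ∈ {2, 3}`, and so
do `t₀` and everything linked to `x`; then the whole image fixes `p`, contradicting
transitivity. Hence `z₀` centralises the image. Conversely an element of the centraliser of a
transitive group is `1` if it has a fixed point, and otherwise, commuting with `t₀`, it is `z₀`.
So the stabiliser of `φ` under conjugation has order `2` and its orbit has `24 / 2 = 12`
elements.
-/

open Equiv MulAction

theorem PresentedGroup.map_mem_of_forall_map_of_mem {α G : Type*} [Group G]
    {rels : Set (FreeGroup α)} (φ : PresentedGroup rels →* G) (H : Subgroup G)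
    (h : ∀ j, φ (.of j) ∈ H) (x : PresentedGroup rels) : φ x ∈ H :=
  PresentedGroup.generated_by rels (H.comap φ) h x

theorem Equiv.Perm.eq_one_of_forall_commute_of_apply_eq {ι α : Type*} {f : ι → Perm α}
    (htrans : ∀ i j, ∃ g, f g i = j) {c : Perm α} (hc : ∀ g, Commute c (f g)) {x : α}
    (hx : c x = x) : c = 1 := by
  ext y
  obtain ⟨g, rfl⟩ := htrans x y
  simpa [hx] using DFunLike.congr_fun (hc g) x

namespace Braid

section

variable {n : ℕ}

theorem IsGeneric.conj {φ : B →* Perm (Fin n)} (h : IsGeneric n φ) (τ : Perm (Fin n)) :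
    IsGeneric n ((MulAut.conj τ).toMonoidHom.comp φ) := by
  obtain ⟨⟨i, j, hij, hsw⟩, htrans⟩ := h
  refine ⟨⟨τ i, τ j, τ.injective.ne hij, ?_⟩, fun i j => ?_⟩
  · simp [hsw, swap_apply_apply]
  · obtain ⟨g, hg⟩ := htrans (τ.symm i) (τ.symm j)
    exact ⟨g, by simp [hg]⟩

theorem coe_conj_comp (τ : Perm (Fin n)) (φ : B →* Perm (Fin n)) :
    ⇑((MulAut.conj τ).toMonoidHom.comp φ) = ConjAct.toConjAct τ • ⇑φ := by
  ext g : 1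
  simp [ConjAct.smul_def]

theorem ncard_conj_eq_ncard_orbit {φ : B →* Perm (Fin n)} (h : IsGeneric n φ) :
    {ψ : {ψ : B →* Perm (Fin n) // IsGeneric n ψ} |
      ∃ τ : Perm (Fin n), ∀ g : B, ψ.1 g = τ * φ g * τ⁻¹}.ncard =
      (orbit (ConjAct (Perm (Fin n))) ⇑φ).ncard := by
  have hinj : Function.Injective fun ψ : {ψ : B →* Perm (Fin n) // IsGeneric n ψ} => ⇑ψ.1 :=
    fun ψ ψ' e => Subtype.ext (DFunLike.coe_injective e)
  convert Set.ncard_preimage_of_injective_subset_range hinj ?_ using 2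
  · ext ψ
    rw [Set.mem_preimage, mem_orbit_iff, ConjAct.toConjAct.surjective.exists]
    simp [funext_iff, ConjAct.smul_def, eq_comm]
  · rintro _ ⟨τ, rfl⟩
    exact ⟨⟨_, h.conj (ConjAct.ofConjAct τ)⟩, coe_conj_comp _ φ⟩

end

def t₀ : Perm (Fin 4) := swap 0 1

def z₀ : Perm (Fin 4) := swap 0 1 * swap 2 3

/-- With `φ σ = t₀ = t₀⁻¹`, each of the relations (R2)–(R4) says `Linked (φ x) (φ y)`. -/
def Linked (x y : Perm (Fin 4)) : Prop := t₀ * x * t₀ * y = y * t₀ * x * t₀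

instance (x y : Perm (Fin 4)) : Decidable (Linked x y) := inferInstanceAs (Decidable (_ = _))

theorem linked_or_linked {φ : B →* Perm (Fin 4)} (hσ : φ σB = t₀) {i j : Gen}
    (hi : i ≠ .s) (hj : j ≠ .s) :
    Linked (φ (.of i)) (φ (.of j)) ∨ Linked (φ (.of j)) (φ (.of i)) := by
  set ψ := φ.comp (PresentedGroup.mk rels)
  have hrels : ∀ r ∈ rels, ψ r = 1 := fun r hr => by
    simp [ψ, PresentedGroup.one_of_mem hr]
  have ht : ψ Sg = t₀ := hσ
  have ht_inv : t₀⁻¹ = t₀ := swap_inv 0 1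
  simp only [rels, Set.forall_mem_insert, Set.mem_singleton_iff, forall_eq, map_mul, map_inv,
    mul_inv_eq_one, ht, ht_inv] at hrels
  obtain ⟨h₁₁, h₂₂, h₃₃, h₄₄, h₁₂, h₃₄, h₁₄, h₃₂, h₁₃, h₂₄, -⟩ := hrels
  cases i <;> cases j <;>
    first
    | exact absurd rfl hi
    | exact absurd rfl hj
    | exact .inl (by assumption)
    | exact .inr (by assumption)

theorem exists_common_fixed_of_not_commute : ∀ x : Perm (Fin 4), Linked x x → ¬Commute z₀ x →
    ∃ p : Fin 4, p ≠ 0 ∧ t₀ p = p ∧ ∀ y, Linked y y → Linked x y ∨ Linked y x → y p = p := by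
  unfold Commute SemiconjBy
  decide

theorem eq_z₀_of_commute : ∀ c : Perm (Fin 4), (∀ x, c x ≠ x) → Commute c t₀ → c = z₀ := by
  unfold Commute SemiconjBy
  decide

variable {φ : B →* Perm (Fin 4)}

theorem commute_z₀ (h : IsGeneric 4 φ) (hσ : φ σB = t₀) (g : B) : Commute z₀ (φ g) := by
  suffices hgen : ∀ i, φ (.of i) ∈ Subgroup.centralizer {z₀} from
    (Subgroup.mem_centralizer_singleton_iff.1
      (PresentedGroup.map_mem_of_forall_map_of_mem φ _ hgen g)).symm
  intro i
  rw [Subgroup.mem_centralizer_singleton_iff]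
  rcases eq_or_ne i .s with rfl | hi
  · change φ σB * z₀ = z₀ * φ σB
    rw [hσ]
    decide
  by_contra hnc
  obtain ⟨p, hp0, htp, hfix⟩ := exists_common_fixed_of_not_commute _
    (by simpa using linked_or_linked hσ hi hi) (fun hc => hnc hc.eq.symm)
  have hgen : ∀ j, φ (.of j) ∈ stabilizer (Perm (Fin 4)) p := by
    intro j
    rw [mem_stabilizer_iff, Perm.smul_def]
    rcases eq_or_ne j .s with rfl | hj
    · exact (congrArg (· p) hσ).trans htp
    · exact hfix _ (by simpa using linked_or_linked hσ hj hj) (linked_or_linked hσ hi hj)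
  obtain ⟨g, hg⟩ := h.2 p 0
  have hgp : φ g p = p := PresentedGroup.map_mem_of_forall_map_of_mem φ _ hgen g
  exact hp0 (hgp.symm.trans hg)

theorem eq_one_or_eq_z₀ (h : IsGeneric 4 φ) (hσ : φ σB = t₀) {c : Perm (Fin 4)}
    (hc : ∀ g, Commute c (φ g)) : c = 1 ∨ c = z₀ := by
  by_cases hfix : ∃ x, c x = x
  · obtain ⟨x, hx⟩ := hfix
    exact .inl (Perm.eq_one_of_forall_commute_of_apply_eq h.2 hc hx)
  · exact .inr (eq_z₀_of_commute c (fun x hx => hfix ⟨x, hx⟩) (hσ ▸ hc σB))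

theorem stabilizer_eq_zpowers_z₀ (h : IsGeneric 4 φ) (hσ : φ σB = t₀) :
    stabilizer (ConjAct (Perm (Fin 4))) ⇑φ = Subgroup.zpowers (ConjAct.toConjAct z₀) := by
  have mem_iff (c : Perm (Fin 4)) :
      ConjAct.toConjAct c ∈ stabilizer _ ⇑φ ↔ ∀ g, Commute c (φ g) := by
    simp [mem_stabilizer_iff, funext_iff, ConjAct.smul_def, commute_iff_eq, mul_inv_eq_iff_eq_mul]
  refine le_antisymm (fun c hc => ?_) (Subgroup.zpowers_le.2 ((mem_iff z₀).2 (commute_z₀ h hσ)))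
  obtain ⟨c, rfl⟩ := ConjAct.toConjAct.surjective c
  rcases eq_one_or_eq_z₀ h hσ ((mem_iff c).1 hc) with rfl | rfl
  · exact one_mem _
  · exact Subgroup.mem_zpowers _

theorem ncard_orbit_eq_twelve (h : IsGeneric 4 φ) (hσ : φ σB = t₀) :
    (orbit (ConjAct (Perm (Fin 4))) ⇑φ).ncard = 12 := by
  have horder : orderOf (ConjAct.toConjAct z₀) = 2 := by
    rw [MulEquiv.orderOf_eq]
    exact orderOf_eq_prime (by decide) (by decide)
  have hcard := (stabilizer (ConjAct (Perm (Fin 4))) ⇑φ).card_mul_index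
  rw [index_stabilizer, stabilizer_eq_zpowers_z₀ h hσ, Nat.card_zpowers, horder,
    Nat.card_eq_fintype_card, ConjAct.card, Fintype.card_perm, Fintype.card_fin] at hcard
  have hfact : Nat.factorial 4 = 24 := rfl
  omega

end Braid

/-- Every orbit of the conjugation action of S₄ on the set of generic
monodromy representations of B in S₄ consists of exactly 12 elements. -/
theorem stmt8 (φ : B →* Equiv.Perm (Fin 4)) (h : IsGeneric 4 φ) :
    Set.ncard {ψ : {ψ : B →* Equiv.Perm (Fin 4) // IsGeneric 4 ψ} |
      ∃ τ : Equiv.Perm (Fin 4), ∀ g : B, ψ.1 g = τ * φ g * τ⁻¹} = 12 := by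
  obtain ⟨i, j, hij, hsw⟩ := h.1
  obtain ⟨ρ, hρ⟩ := isConj_iff.1 (Perm.isConj_swap hij (zero_ne_one' (Fin 4)))
  have hσ : (MulAut.conj ρ).toMonoidHom.comp φ σB = t₀ := by simp [hsw, ← hρ, t₀]
  rw [ncard_conj_eq_ncard_orbit h, ← orbit_smul (ConjAct.toConjAct ρ), ← coe_conj_comp]
  exact ncard_orbit_eq_twelve (h.conj ρ) hσ
end

section
/- There are no generic monodromy representations of B in S₅; that is, there is no group homomorphism φ: B → S₅ such that φ(σ) is a transposition and the image of φ is a transitive subgroup of S₅. -/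
open Braid

/-!
Conjugating, we may assume that `φ σ = τ = (0 1)`. Since `τ` is an involution, each of the
relations (R2)–(R4) says that `τ x τ` commutes with `y` for images `x, y` of generators among
`a₁, a₂, b₁, b₂`. For a permutation `x` let `O(x)` (`x.cyclesThrough 0 1`) be the union of the
`x`-cycles through `0` and `1`. A finite check in `S₅` shows that for such `x, y` the sets `O(x)`
and `O(y)` are comparable and that `O(x)` is never all of `Fin 5`. Moreover, if `O(x) ⊆ O(y)` then
`τ x τ`, which commutes with `y` and so permutes its cycles, maps `O(y)` to itself, hence so does
`x`. The largest of the `O(x)` is therefore a proper subset stable under all generators, against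
transitivity.
-/

open Equiv Finset Pointwise

instance {M : Type*} [Mul M] [DecidableEq M] : DecidableRel (Commute : M → M → Prop) :=
  fun a b => inferInstanceAs (Decidable (a * b = b * a))

theorem Commute.conj_symm_of_mul_self {G : Type*} [Group G] {t x y : G} (ht : t * t = 1)
    (h : Commute (t * x * t) y) : Commute (t * y * t) x := by
  have htt : ∀ z, t * (t * z) = z := fun z => by rw [← mul_assoc, ht, one_mul]
  have := congrArg (t * · * t) h.eq
  simp only [mul_assoc, htt, ht, mul_one] at this
  simp only [Commute, SemiconjBy, mul_assoc, this]

theorem Equiv.mapsTo_swap {α : Type*} [DecidableEq α] {a b : α} {s : Set α} (ha : a ∈ s)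
    (hb : b ∈ s) : Set.MapsTo (swap a b) s s := by
  intro k hk
  rw [swap_apply_def]
  split_ifs
  exacts [hb, ha, hk]

theorem PresentedGroup.mapsTo_of_forall_mapsTo_of {ι α : Type*} {rels : Set (FreeGroup ι)}
    (φ : PresentedGroup rels →* Perm α) {s : Set α} (hs : s.Finite)
    (h : ∀ i, Set.MapsTo (φ (.of i)) s s) (g : PresentedGroup rels) : Set.MapsTo (φ g) s s := by
  have hstab : ∀ x : Perm α, Set.MapsTo x s s → x ∈ MulAction.stabilizer (Perm α) s := fun x hx =>
    by simpa [MulAction.mem_stabilizer_iff, ← Set.image_smul, Perm.smul_def] using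
      ((hs.injOn_iff_bijOn_of_mapsTo hx).1 x.injective.injOn).image_eq
  have hg : φ g ∈ MulAction.stabilizer (Perm α) s :=
    PresentedGroup.generated_by rels ((MulAction.stabilizer _ s).comap φ) (fun i => hstab _ (h i)) g
  intro k hk
  rw [← MulAction.mem_stabilizer_iff.1 hg]
  exact Set.smul_mem_smul_set hk

namespace Equiv.Perm

variable {α : Type*} [Fintype α] [DecidableEq α]

def cyclesThrough (x : Perm α) (a b : α) : Finset α :=
  univ.filter fun k => x.SameCycle a k ∨ x.SameCycle b k

variable {x y : Perm α} {a b k : α}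

theorem mem_cyclesThrough : k ∈ x.cyclesThrough a b ↔ x.SameCycle a k ∨ x.SameCycle b k := by
  simp [cyclesThrough]

theorem left_mem_cyclesThrough : a ∈ x.cyclesThrough a b :=
  mem_cyclesThrough.2 (.inl .rfl)

theorem right_mem_cyclesThrough : b ∈ x.cyclesThrough a b :=
  mem_cyclesThrough.2 (.inr .rfl)

theorem apply_mem_cyclesThrough (hk : k ∈ x.cyclesThrough a b) : x k ∈ x.cyclesThrough a b := by
  simpa only [mem_cyclesThrough, sameCycle_apply_right] using hk

theorem swap_apply_mem_cyclesThrough (hk : k ∈ x.cyclesThrough a b) :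
    swap a b k ∈ x.cyclesThrough a b :=
  mem_coe.1 <| mapsTo_swap (mem_coe.2 left_mem_cyclesThrough) (mem_coe.2 right_mem_cyclesThrough)
    (mem_coe.2 hk)

theorem apply_mem_cyclesThrough_of_commute {c : Perm α} (hc : Commute c y)
    (hca : c a ∈ y.cyclesThrough a b) (hcb : c b ∈ y.cyclesThrough a b)
    (hk : k ∈ y.cyclesThrough a b) : c k ∈ y.cyclesThrough a b := by
  have hcycle : ∀ {u v}, y.SameCycle u v → y.SameCycle (c u) (c v) := fun h => by
    simpa only [hc.eq, mul_inv_cancel_right] using h.conj (g := c)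
  rw [mem_cyclesThrough] at hca hcb hk ⊢
  rcases hk with hk | hk
  · exact hca.imp (·.trans (hcycle hk)) (·.trans (hcycle hk))
  · exact hcb.imp (·.trans (hcycle hk)) (·.trans (hcycle hk))

theorem mapsTo_cyclesThrough (hxy : Commute (swap a b * x * swap a b) y)
    (hsub : x.cyclesThrough a b ⊆ y.cyclesThrough a b) :
    Set.MapsTo x (y.cyclesThrough a b) (y.cyclesThrough a b) := by
  set c := swap a b * x * swap a b
  have hxa : swap a b (x a) ∈ y.cyclesThrough a b :=
    swap_apply_mem_cyclesThrough (hsub (apply_mem_cyclesThrough left_mem_cyclesThrough))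
  have hxb : swap a b (x b) ∈ y.cyclesThrough a b :=
    swap_apply_mem_cyclesThrough (hsub (apply_mem_cyclesThrough right_mem_cyclesThrough))
  have hc : ∀ {u}, u ∈ y.cyclesThrough a b → c u ∈ y.cyclesThrough a b := fun hu =>
    apply_mem_cyclesThrough_of_commute hxy (by simpa [c] using hxb) (by simpa [c] using hxa) hu
  intro k hk
  simpa [c] using swap_apply_mem_cyclesThrough (hc (swap_apply_mem_cyclesThrough hk))

end Equiv.Perm

namespace Braid

local notation "τ" => swap (0 : Fin 5) 1

theorem cyclesThrough_ne_univ :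
    ∀ x : Perm (Fin 5), Commute (τ * x * τ) x → x.cyclesThrough 0 1 ≠ univ := by
  decide +kernel

theorem cyclesThrough_subset_total : ∀ x : Perm (Fin 5), Commute (τ * x * τ) x →
    ∀ y, Commute (τ * x * τ) y →
      x.cyclesThrough 0 1 ⊆ y.cyclesThrough 0 1 ∨ y.cyclesThrough 0 1 ⊆ x.cyclesThrough 0 1 := by
  decide +kernel

theorem exists_invariant_of_commute_conj (X : Finset (Perm (Fin 5))) (hX : X.Nonempty)
    (h : ∀ x ∈ X, ∀ y ∈ X, Commute (τ * x * τ) y) :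
    ∃ S : Finset (Fin 5), 0 ∈ S ∧ 1 ∈ S ∧ S ≠ univ ∧ ∀ x ∈ X, Set.MapsTo x S S := by
  obtain ⟨x₀, hx₀, hmax⟩ := X.exists_max_image (fun x => #(x.cyclesThrough 0 1)) hX
  have hsub : ∀ x ∈ X, x.cyclesThrough 0 1 ⊆ x₀.cyclesThrough 0 1 := fun x hx =>
    (cyclesThrough_subset_total x (h x hx x hx) x₀ (h x hx x₀ hx₀)).elim id fun hsup =>
      (eq_of_subset_of_card_le hsup (hmax x hx)).symm.subset
  exact ⟨_, Perm.left_mem_cyclesThrough, Perm.right_mem_cyclesThrough,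
    cyclesThrough_ne_univ x₀ (h x₀ hx₀ x₀ hx₀),
    fun x hx => Perm.mapsTo_cyclesThrough (h x hx x₀ hx₀) (hsub x hx)⟩

theorem commute_conj_of_rels {G : Type*} [Group G] (f : FreeGroup Gen →* G)
    (hf : ∀ r ∈ rels, f r = 1) (hσ : f Sg * f Sg = 1) {a b : Gen} (ha : a ≠ .s) (hb : b ≠ .s) :
    Commute (f Sg * f (.of a) * f Sg) (f (.of b)) := by
  have hinv : (f Sg)⁻¹ = f Sg := inv_eq_of_mul_eq_one_right hσ
  simp only [rels, Set.mem_insert_iff, Set.mem_singleton_iff, forall_eq_or_imp, forall_eq,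
    map_mul, map_inv, mul_inv_eq_one, hinv] at hf
  obtain ⟨hA1, hA2, hB1, hB2, hA1A2, hB1B2, hA1B2, hB1A2, hA1B1, hA2B2, -⟩ := hf
  have hcomm : ∀ {x y : G}, f Sg * x * f Sg * y = y * f Sg * x * f Sg →
      Commute (f Sg * x * f Sg) y := fun h => h.trans (by simp only [mul_assoc])
  cases a <;> cases b <;> first
    | exact absurd rfl ha | exact absurd rfl hb
    | exact hcomm (by assumption) | exact (hcomm (by assumption)).conj_symm_of_mul_self hσ

theorem exists_invariant_of_map_σB (φ : B →* Perm (Fin 5)) (hσ : φ σB = τ) :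
    ∃ S : Finset (Fin 5), S.Nonempty ∧ S ≠ univ ∧ ∀ g, Set.MapsTo (φ g) S S := by
  set f := φ.comp (PresentedGroup.mk rels)
  have hfσ : f Sg = τ := hσ
  have hcomm : ∀ {a b : Gen}, a ≠ .s → b ≠ .s →
      Commute (τ * φ (.of a) * τ) (φ (.of b)) := fun ha hb => by
    have h := commute_conj_of_rels f (fun r hr => by simp [f, PresentedGroup.one_of_mem hr])
      (by rw [hfσ, swap_mul_self]) ha hb
    rw [hfσ] at h
    exact h
  set X : Finset (Perm (Fin 5)) := {φ (.of .a1), φ (.of .a2), φ (.of .b1), φ (.of .b2)}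
  obtain ⟨S, h0, h1, hS, hXS⟩ := exists_invariant_of_commute_conj X (insert_nonempty _ _) (by
    simp only [X, mem_insert, mem_singleton]
    rintro x (rfl | rfl | rfl | rfl) y (rfl | rfl | rfl | rfl) <;>
      exact hcomm (by decide) (by decide))
  refine ⟨S, ⟨0, h0⟩, hS, PresentedGroup.mapsTo_of_forall_mapsTo_of φ S.finite_toSet ?_⟩
  rintro (_ | _ | _ | _ | _)
  case s => exact hσ ▸ mapsTo_swap h0 h1
  all_goals exact hXS _ (by simp [X])

end Braid

/-- There are no generic monodromy representations of B in S₅. -/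
theorem stmt9 : ¬ ∃ φ : B →* Equiv.Perm (Fin 5), IsGeneric 5 φ := by
  rintro ⟨φ, ⟨i, j, hij, hσ⟩, htrans⟩
  obtain ⟨c, hc⟩ := isConj_iff.1 (Perm.isConj_swap hij (zero_ne_one : (0 : Fin 5) ≠ 1))
  set ψ := (MulAut.conj c).toMonoidHom.comp φ
  obtain ⟨S, ⟨k, hk⟩, hS, hinv⟩ := exists_invariant_of_map_σB ψ (by simpa [ψ, hσ] using hc)
  refine hS (eq_univ_of_forall fun l => ?_)
  obtain ⟨g, hg⟩ := htrans (c.symm k) (c.symm l)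
  simpa [ψ, hg] using hinv g hk
end

section
/- There are no generic monodromy representations of B in S₉; that is, there is no group homomorphism φ: B → S₉ such that φ(σ) is a transposition and the image of φ is a transitive subgroup of S₉. -/
open Braid

open Equiv (Perm swap)
open MulAction Pointwise Subgroup

theorem conj_commute_symm {G : Type*} [Group G] {s x y : G} (hs : s * s = 1)
    (h : s * x * s * y = y * s * x * s) : x * s * y * s = s * y * s * x := by
  have hs' : s⁻¹ = s := inv_eq_of_mul_eq_one_right hs
  calc x * s * y * s = s⁻¹ * (s * x * s * y) * s := by group
    _ = s⁻¹ * (y * s * x * s) * s := by rw [h]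
    _ = s * y * s * x * (s * s) := by rw [hs']; group
    _ = s * y * s * x := by rw [hs, mul_one]

lemma exists_ne_of_five_le_card {α : Type*} [Finite α] (h : 5 ≤ Nat.card α) (a b c d : α) :
    ∃ x, x ≠ a ∧ x ≠ b ∧ x ≠ c ∧ x ≠ d := by
  classical
  have := Fintype.ofFinite α
  obtain ⟨x, -, hx⟩ := Finset.exists_mem_notMem_of_card_lt_card (s := {a, b, c, d})
    (t := Finset.univ)
    (Finset.card_le_four.trans_lt (by rwa [Finset.card_univ, ← Nat.card_eq_fintype_card]))
  simp only [Finset.mem_insert, Finset.mem_singleton, not_or] at hx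
  exact ⟨x, hx⟩

namespace Subgroup

theorem conj_mem_centralizer_closure {G : Type*} [Group G] {S : Set G} {s : G}
    (h : ∀ x ∈ S, s * x * s⁻¹ ∈ centralizer S) :
    ∀ g ∈ closure S, s * g * s⁻¹ ∈ centralizer (closure S) := by
  rw [centralizer_closure]
  exact fun g hg => (closure_le ((centralizer S).comap (MulAut.conj s).toMonoidHom)).mpr h hg

variable {α : Type*} {K : Subgroup (Perm α)}

lemma mem_orbit_iff_exists_apply_eq {x y : α} : y ∈ orbit K x ↔ ∃ k ∈ K, k x = y := by
  simp [mem_orbit_iff, Subgroup.smul_def, Perm.smul_def]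

lemma image_orbit_of_mem_centralizer {t : Perm α} (ht : t ∈ centralizer K) (x : α) :
    t '' orbit K x = orbit K (t x) := by
  ext y
  simp only [Set.mem_image, mem_orbit_iff_exists_apply_eq]
  constructor
  · rintro ⟨_, ⟨k, hk, rfl⟩, rfl⟩
    exact ⟨k, hk, by simpa using congr($(ht k hk) x)⟩
  · rintro ⟨k, hk, rfl⟩
    exact ⟨k x, ⟨k, hk, rfl⟩, by simpa using congr($(ht k hk) x).symm⟩

lemma eq_one_of_mem_centralizer_of_isPretransitive [IsPretransitive K α] {w : Perm α}
    (hw : w ∈ centralizer K) {x : α} (hx : w x = x) : w = 1 := by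
  ext y
  obtain ⟨k, rfl⟩ := MulAction.exists_smul_eq K x y
  simpa [Subgroup.smul_def, hx] using congr($(hw k k.2) x).symm

section Transposition

variable [DecidableEq α] {p q : α}

variable (K p q) in
lemma mem_orbit_or_mem_orbit [IsPretransitive ↥(K ⊔ zpowers (swap p q)) α] (x : α) :
    x ∈ orbit K p ∨ x ∈ orbit K q := by
  by_contra! h
  have hp : p ∉ orbit K x := fun hp => h.1 (mem_orbit_symm.mp hp)
  have hq : q ∉ orbit K x := fun hq => h.2 (mem_orbit_symm.mp hq)
  have hstab : K ⊔ zpowers (swap p q) ≤ stabilizer (Perm α) (orbit K x) := by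
    refine sup_le (fun k hk => smul_orbit (⟨k, hk⟩ : K) x) (zpowers_le.mpr ?_)
    refine fixingSubgroup_le_stabilizer _ _ fun ⟨y, hy⟩ => ?_
    exact Equiv.swap_apply_of_ne_of_ne (ne_of_mem_of_not_mem hy hp) (ne_of_mem_of_not_mem hy hq)
  obtain ⟨h, hh⟩ := MulAction.exists_smul_eq ↥(K ⊔ zpowers (swap p q)) x p
  refine hp (hh ▸ ?_)
  rw [← mem_stabilizer_iff.mp (hstab h.2)]
  exact Set.smul_mem_smul_set (mem_orbit_self x)

variable (hK : ∀ g ∈ K, swap p q * g * (swap p q)⁻¹ ∈ centralizer K)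
include hK

lemma apply_eq_self_of_conj_apply_mem_orbit (hq : q ∉ orbit K p)
    (hpres : ∀ g ∈ K, (swap p q * g * (swap p q)⁻¹) p ∈ orbit K p) {k : Perm α}
    (hk : k ∈ K) : k p = p := by
  by_contra hkp
  have hkpO : k p ∈ orbit K p := mem_orbit_iff_exists_apply_eq.mpr ⟨k, hk, rfl⟩
  have hfix : swap p q (k p) = k p :=
    Equiv.swap_apply_of_ne_of_ne hkp (ne_of_mem_of_not_mem hkpO hq)
  set t := swap p q * k⁻¹ * (swap p q)⁻¹
  have hinv : t '' orbit K p = orbit K p := by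
    rw [image_orbit_of_mem_centralizer (hK _ (inv_mem hk)), orbit_eq_iff]
    exact hpres _ (inv_mem hk)
  refine hq ?_
  rw [← hinv]
  exact ⟨k p, hkpO, by simp [t, hfix]⟩

lemma ncard_orbit_eq_or_orbit_eq_singleton [IsPretransitive ↥(K ⊔ zpowers (swap p q)) α]
    (hq : q ∉ orbit K p) : (orbit K p).ncard = (orbit K q).ncard ∨ orbit K p = {p} := by
  by_cases hpres : ∀ g ∈ K, (swap p q * g * (swap p q)⁻¹) p ∈ orbit K p
  · refine Or.inr (Set.eq_singleton_iff_unique_mem.mpr ⟨mem_orbit_self p, fun y hy => ?_⟩)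
    obtain ⟨k, hk, rfl⟩ := mem_orbit_iff_exists_apply_eq.mp hy
    exact apply_eq_self_of_conj_apply_mem_orbit hK hq hpres hk
  · push Not at hpres
    obtain ⟨g, hg, hgp⟩ := hpres
    refine Or.inl ?_
    rw [← orbit_eq_iff.mpr ((mem_orbit_or_mem_orbit K p q _).resolve_left hgp),
      ← image_orbit_of_mem_centralizer (hK g hg),
      Set.ncard_image_of_injective _ (Equiv.injective _)]

lemma ncard_orbit_eq_ncard_orbit [IsPretransitive ↥(K ⊔ zpowers (swap p q)) α]
    (hq : q ∉ orbit K p) : (orbit K p).ncard = (orbit K q).ncard := by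
  have hp : p ∉ orbit K q := fun hp => hq (mem_orbit_symm.mp hp)
  have : IsPretransitive ↥(K ⊔ zpowers (swap q p)) α := by rwa [Equiv.swap_comm]
  rcases ncard_orbit_eq_or_orbit_eq_singleton hK hq with h | hp1
  · exact h
  rcases ncard_orbit_eq_or_orbit_eq_singleton (by rwa [Equiv.swap_comm]) hp with h | hq1
  · exact h.symm
  rw [hp1, hq1, Set.ncard_singleton, Set.ncard_singleton]

theorem isPretransitive_of_odd_card [Finite α] [IsPretransitive ↥(K ⊔ zpowers (swap p q)) α]
    (hodd : Odd (Nat.card α)) : IsPretransitive K α := by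
  have hcover := mem_orbit_or_mem_orbit K p q
  by_cases hq : q ∈ orbit K p
  · refine (isPretransitive_iff_orbit_eq_univ p).mpr (Set.eq_univ_of_forall fun x => ?_)
    rcases hcover x with hx | hx
    · exact hx
    · rwa [← orbit_eq_iff.mpr hq]
  · refine absurd hodd (Nat.not_odd_iff_even.mpr ⟨(orbit K p).ncard, ?_⟩)
    have hdisj := (orbit.eq_or_disjoint p q).resolve_left fun h => hq (h ▸ mem_orbit_self q)
    rw [← Set.ncard_univ, ← Set.eq_univ_of_forall (s := orbit K p ∪ orbit K q) hcover,
      Set.ncard_union_eq hdisj, ncard_orbit_eq_ncard_orbit hK hq]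

end Transposition

section Regular

variable [IsPretransitive K α] {s : Perm α} (hK : ∀ g ∈ K, s * g * s⁻¹ ∈ centralizer K)
include hK

lemma eq_one_of_apply_eq_self_of_conj_mem_centralizer {k : Perm α} (hk : k ∈ K) {x : α}
    (hx : k x = x) : k = 1 := by
  have := eq_one_of_mem_centralizer_of_isPretransitive (hK k hk) (x := s x) (by simp [hx])
  simpa [mul_inv_eq_one, mul_eq_left] using this

lemma card_eq_of_conj_mem_centralizer (x : α) : Nat.card K = Nat.card α := by
  refine Nat.card_eq_of_bijective (fun k : K => (k : Perm α) x)
    ⟨fun k₁ k₂ h => ?_, fun y => ?_⟩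
  · have := eq_one_of_apply_eq_self_of_conj_mem_centralizer hK (mul_mem (inv_mem k₂.2) k₁.2)
      (x := x) (by simp [Perm.mul_apply, h])
    exact Subtype.ext (inv_mul_eq_one.mp this).symm
  · obtain ⟨k, hk⟩ := MulAction.exists_smul_eq K x y
    exact ⟨k, hk⟩

end Regular

theorem not_isPretransitive_of_isMulCommutative [Finite α] [DecidableEq α] [IsMulCommutative K]
    {p q : α} (hpq : p ≠ q) (hK : ∀ g ∈ K, swap p q * g * (swap p q)⁻¹ ∈ centralizer K)
    (hcard : 5 ≤ Nat.card α) : ¬ IsPretransitive K α := by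
  intro htr
  have hconj : ∀ g ∈ K, swap p q * g * (swap p q)⁻¹ = g := fun g hg => by
    obtain ⟨x, hxp, hxq, hxgp, hxgq⟩ := exists_ne_of_five_le_card hcard p q (g p) (g q)
    refine mul_inv_eq_one.mp (eq_one_of_mem_centralizer_of_isPretransitive
      (mul_mem (hK g hg) (le_centralizer K (inv_mem hg))) (x := x) ?_)
    rw [Perm.mul_apply, Perm.mul_apply, Perm.mul_apply, Equiv.swap_inv,
      Equiv.swap_apply_of_ne_of_ne (Perm.inv_eq_iff_eq.not.mpr hxgp)
        (Perm.inv_eq_iff_eq.not.mpr hxgq),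
      Perm.coe_inv, Equiv.apply_symm_apply, Equiv.swap_apply_of_ne_of_ne hxp hxq]
  have hswap : swap p q ∈ centralizer K := fun g hg =>
    (mul_inv_eq_iff_eq_mul.mp (hconj g hg)).symm
  obtain ⟨x, hxp, hxq, -⟩ := exists_ne_of_five_le_card hcard p q p q
  exact hpq (Equiv.swap_eq_one_iff.mp
    (eq_one_of_mem_centralizer_of_isPretransitive hswap
      (Equiv.swap_apply_of_ne_of_ne hxp hxq)))

end Subgroup

namespace Braid

def surfaceGens : Set B :=
  {PresentedGroup.of Gen.a1, PresentedGroup.of Gen.b1, PresentedGroup.of Gen.a2,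
    PresentedGroup.of Gen.b2}

theorem range_le_closure_sup_zpowers {G : Type*} [Group G] (φ : B →* G) :
    φ.range ≤ closure (φ '' surfaceGens) ⊔ zpowers (φ σB) := by
  rw [MonoidHom.range_eq_map, ← PresentedGroup.closure_range_of, MonoidHom.map_closure,
    closure_le]
  rintro _ ⟨_, ⟨g, rfl⟩, rfl⟩
  cases g
  case s => exact mem_sup_right (mem_zpowers _)
  all_goals exact mem_sup_left (subset_closure ⟨_, by simp [surfaceGens], rfl⟩)

theorem conj_mem_centralizer_surfaceGens {G : Type*} [Group G] (φ : B →* G)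
    (hσ : (φ σB)⁻¹ = φ σB) :
    ∀ x ∈ φ '' surfaceGens,
      φ σB * x * (φ σB)⁻¹ ∈ centralizer (φ '' surfaceGens) := by
  set ψ := φ.comp (PresentedGroup.mk rels)
  have hψ : ∀ r ∈ rels, ψ r = 1 := fun r hr => by simp [ψ, PresentedGroup.one_of_mem hr]
  have hs : φ σB = ψ Sg := rfl
  have hof : ∀ g, φ (PresentedGroup.of g) = ψ (FreeGroup.of g) := fun _ => rfl
  rw [hs] at hσ ⊢
  have hss : ψ Sg * ψ Sg = 1 := by rw [← mul_inv_cancel (ψ Sg), hσ]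
  simp only [rels, Set.forall_mem_insert, map_mul, map_inv, hσ, mul_inv_eq_one] at hψ
  obtain ⟨h1, h2, h3, h4, h5, h6, h7, h8, h9, h10, -⟩ := hψ
  rintro _ ⟨x, hx, rfl⟩ _ ⟨y, hy, rfl⟩
  simp only [surfaceGens, Set.mem_insert_iff, Set.mem_singleton_iff] at hx hy
  -- (R2)–(R4) give ten of the sixteen pairs; the other six follow by conjugating with `ψ Sg`.
  rcases hx with rfl | rfl | rfl | rfl <;> rcases hy with rfl | rfl | rfl | rfl <;>
    simp only [hof, hσ, ← mul_assoc] <;>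
    first | (symm; assumption) | (apply conj_commute_symm hss; assumption)

end Braid

/-- There are no generic monodromy representations of B in S₉. -/
theorem stmt13 : ¬ ∃ φ : B →* Equiv.Perm (Fin 9), IsGeneric 9 φ := by
  rintro ⟨φ, ⟨p, q, hpq, hσ⟩, htr⟩
  set K := closure (φ '' surfaceGens)
  have hK : ∀ g ∈ K, swap p q * g * (swap p q)⁻¹ ∈ centralizer K := by
    rw [← hσ]
    exact conj_mem_centralizer_closure
      (conj_mem_centralizer_surfaceGens φ (by rw [hσ, Equiv.swap_inv]))
  have : IsPretransitive ↥(K ⊔ zpowers (swap p q)) (Fin 9) := by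
    refine ⟨fun i j => ?_⟩
    obtain ⟨g, hg⟩ := htr i j
    exact ⟨⟨φ g, hσ ▸ range_le_closure_sup_zpowers φ ⟨g, rfl⟩⟩, hg⟩
  have hKtr : IsPretransitive K (Fin 9) :=
    isPretransitive_of_odd_card hK (by rw [Nat.card_fin]; decide)
  have : Fact (Nat.Prime 3) := ⟨Nat.prime_three⟩
  have : IsMulCommutative K :=
    IsPGroup.isMulCommutative_of_card_eq_prime_sq (p := 3)
      ((card_eq_of_conj_mem_centralizer hK 0).trans (by simp))
  exact not_isPretransitive_of_isMulCommutative hpq hK (by simp) hKtr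
end
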